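/- If G is a graph with corona(G) ∩ ∂_L(G) = ∅, then the family of maximum critical independent sets of G equals {T ∩ L(G) : T a maximum independent set of G}; consequently nucleus(G) = core(G) ∩ L(G) and diadem(G) = corona(G) ∩ L(G). -/
import Mathlib


open Finset

variable {V : Type*} [Fintype V] [DecidableEq V] (G : SimpleGraph V) [DecidableRel G.Adj]

/-- `N(S)`: the set of vertices adjacent to some vertex of `S`. -/
def nbhd (S : Finset V) : Finset V := S.biUnion (fun v => G.neighborFinset v)

/-- `S` is an independent set of `G`. -/
def Indep (S : Finset V) : Prop := ∀ u ∈ S, ∀ v ∈ S, ¬ G.Adj u v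

/-- The difference `d_G(S) = |S| - |N(S)|`. -/
def diffI (S : Finset V) : ℤ := (S.card : ℤ) - ((nbhd G S).card : ℤ)

/-- `S` is a maximum independent set of `G`. -/
def IsMaxIndep (S : Finset V) : Prop :=
  Indep G S ∧ ∀ T : Finset V, Indep G T → T.card ≤ S.card

/-- `I` is a critical independent set of `G`. -/
def IsCritIndep (I : Finset V) : Prop :=
  Indep G I ∧ ∀ J : Finset V, Indep G J → diffI G J ≤ diffI G I

/-- `I` is a maximum critical independent set of `G`. -/
def IsMaxCritIndep (I : Finset V) : Prop :=
  IsCritIndep G I ∧ ∀ J : Finset V, IsCritIndep G J → J.card ≤ I.card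

/-- `core(G)`: intersection of all maximum independent sets. -/
def core : Set V := {v | ∀ S : Finset V, IsMaxIndep G S → v ∈ S}

/-- `corona(G)`: union of all maximum independent sets. -/
def corona : Set V := {v | ∃ S : Finset V, IsMaxIndep G S ∧ v ∈ S}

/-- `nucleus(G)`: intersection of all maximum critical independent sets. -/
def nucleus : Set V := {v | ∀ S : Finset V, IsMaxCritIndep G S → v ∈ S}

/-- `diadem(G)`: union of all maximum critical independent sets. -/
def diadem : Set V := {v | ∃ S : Finset V, IsMaxCritIndep G S ∧ v ∈ S}

/-- `ker(G)`: intersection of all critical independent sets. -/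
def kerS : Set V := {v | ∀ S : Finset V, IsCritIndep G S → v ∈ S}

/-- A matching of `G`, given as an involution of the vertex set:
unmatched vertices are fixed points, matched vertices are sent to their partner. -/
def IsMatching (M : V → V) : Prop :=
  Function.Involutive M ∧ ∀ v, M v ≠ v → G.Adj v (M v)

/-- Twice the number of edges of the matching `M`, i.e. the number of matched vertices. -/
def matchSize (M : V → V) : ℕ := (univ.filter fun v => M v ≠ v).card

/-- `M` is a maximum matching of `G`. -/
def IsMaxMatching (M : V → V) : Prop :=
  IsMatching G M ∧ ∀ M' : V → V, IsMatching G M' → matchSize M' ≤ matchSize M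

/-- `M` is a matching of the induced subgraph `G[L]`. -/
def IsMatchingOn (L : Finset V) (M : V → V) : Prop :=
  IsMatching G M ∧ ∀ v, M v ≠ v → v ∈ L

/-- `M` is a maximum matching of the induced subgraph `G[L]`. -/
def IsMaxMatchingOn (L : Finset V) (M : V → V) : Prop :=
  IsMatchingOn G L M ∧ ∀ M' : V → V, IsMatchingOn G L M' → matchSize M' ≤ matchSize M

/-- `S` is a maximum independent set of the induced subgraph `G[L]`. -/
def IsMaxIndepOn (L : Finset V) (S : Finset V) : Prop :=
  S ⊆ L ∧ Indep G S ∧ ∀ T : Finset V, T ⊆ L → Indep G T → T.card ≤ S.card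

/-- `core` of the induced subgraph `G[L]`. -/
def coreOn (L : Finset V) : Set V := {v | ∀ S : Finset V, IsMaxIndepOn G L S → v ∈ S}

/-- `D(G[L])`: vertices of `L` missed by some maximum matching of `G[L]`. -/
def Dset (L : Finset V) : Set V := {v | v ∈ L ∧ ∃ M : V → V, IsMaxMatchingOn G L M ∧ M v = v}

/-- The Larson boundary `∂_L(G)` of the set `L`. -/
def boundaryL (L : Finset V) : Set V := {v | v ∈ L ∧ ∃ w, w ∉ L ∧ G.Adj v w}

/-- The critical difference `d(G)`. -/
noncomputable def critDiff : ℤ := sSup {d : ℤ | ∃ X : Finset V, diffI G X = d}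

/-- The difference of `S` computed in the induced subgraph `G[L]`. -/
def diffOn (L : Finset V) (S : Finset V) : ℤ := (S.card : ℤ) - ((nbhd G S ∩ L).card : ℤ)

/-- The critical difference of the induced subgraph `G[L]`. -/
noncomputable def critDiffOn (L : Finset V) : ℤ := sSup {d : ℤ | ∃ X : Finset V, X ⊆ L ∧ diffOn G L X = d}

/-- `G` is a König–Egerváry graph: `α(G) + μ(G) = |V(G)|`. -/
def KonigEgervary : Prop :=
  ∃ (S : Finset V) (M : V → V), IsMaxIndep G S ∧ IsMaxMatching G M ∧
    2 * S.card + matchSize M = 2 * Fintype.card V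

/-! ### Auxiliary lemmas -/

lemma mem_nbhd {S : Finset V} {u : V} : u ∈ nbhd G S ↔ ∃ v ∈ S, G.Adj v u := by
  simp [nbhd]

lemma nbhd_mono {A B : Finset V} (h : A ⊆ B) : nbhd G A ⊆ nbhd G B := by
  intro x hx
  rw [mem_nbhd] at hx ⊢
  obtain ⟨v, hv, hadj⟩ := hx
  exact ⟨v, h hv, hadj⟩

lemma nbhd_union (A B : Finset V) : nbhd G (A ∪ B) = nbhd G A ∪ nbhd G B := by
  ext x
  simp only [mem_nbhd, Finset.mem_union]
  constructor
  · rintro ⟨v, hv | hv, hadj⟩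
    · exact Or.inl ⟨v, hv, hadj⟩
    · exact Or.inr ⟨v, hv, hadj⟩
  · rintro (⟨v, hv, hadj⟩ | ⟨v, hv, hadj⟩)
    · exact ⟨v, Or.inl hv, hadj⟩
    · exact ⟨v, Or.inr hv, hadj⟩

lemma indep_subset {A B : Finset V} (h : A ⊆ B) (hB : Indep G B) : Indep G A :=
  fun u hu v hv => hB u (h hu) v (h hv)

lemma indep_empty : Indep G (∅ : Finset V) := fun u hu => by simp at hu

lemma exists_maxIndep : ∃ T : Finset V, IsMaxIndep G T := by
  classical
  obtain ⟨T, hT, hmax⟩ := Finset.exists_max_image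
    ((Finset.univ : Finset (Finset V)).filter (fun S => Indep G S)) Finset.card
    ⟨∅, by simp [indep_empty]⟩
  rw [Finset.mem_filter] at hT
  refine ⟨T, hT.2, fun J hJ => hmax J ?_⟩
  rw [Finset.mem_filter]
  exact ⟨Finset.mem_univ _, hJ⟩

/-- Key inequality (Butenko–Trukhanov style): if `S` is critical independent and `T` is
independent, then `|N(S) ∩ T| ≤ |S \ T|`. -/
lemma bt_ineq {S T : Finset V} (hS : IsCritIndep G S) (hT : Indep G T) :
    (nbhd G S ∩ T).card ≤ (S \ T).card := by
  have hWind : Indep G (S ∩ T) := indep_subset G Finset.inter_subset_left hS.1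
  have hNW : nbhd G (S ∩ T) ⊆ nbhd G S := nbhd_mono G Finset.inter_subset_left
  have hdisj : Disjoint (nbhd G S ∩ T) (nbhd G (S ∩ T)) := by
    rw [Finset.disjoint_left]
    intro x hx hx'
    rw [mem_nbhd] at hx'
    obtain ⟨w, hw, hadj⟩ := hx'
    exact hT w (Finset.mem_of_mem_inter_right hw) x (Finset.mem_of_mem_inter_right hx) hadj
  have hcard : (nbhd G S ∩ T).card + (nbhd G (S ∩ T)).card ≤ (nbhd G S).card := by
    rw [← Finset.card_union_of_disjoint hdisj]
    exact Finset.card_le_card (Finset.union_subset Finset.inter_subset_left hNW)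
  have hc : diffI G (S ∩ T) ≤ diffI G S := hS.2 _ hWind
  have hsd : (S \ T).card + (S ∩ T).card = S.card := Finset.card_sdiff_add_card_inter S T
  simp only [diffI] at hc
  omega

/-- The union of two critical independent sets, if independent, is critical. -/
lemma union_crit {A B : Finset V} (hA : IsCritIndep G A) (hB : IsCritIndep G B)
    (hU : Indep G (A ∪ B)) : IsCritIndep G (A ∪ B) := by
  have h1 : (A ∪ B).card + (A ∩ B).card = A.card + B.card :=
    Finset.card_union_add_card_inter A B
  have h2 : (nbhd G (A ∪ B)).card + (nbhd G (A ∩ B)).card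
      ≤ (nbhd G A).card + (nbhd G B).card := by
    rw [nbhd_union]
    have h3 : (nbhd G A ∪ nbhd G B).card + (nbhd G A ∩ nbhd G B).card
        = (nbhd G A).card + (nbhd G B).card := Finset.card_union_add_card_inter _ _
    have h4 : nbhd G (A ∩ B) ⊆ nbhd G A ∩ nbhd G B :=
      Finset.subset_inter (nbhd_mono G Finset.inter_subset_left)
        (nbhd_mono G Finset.inter_subset_right)
    have := Finset.card_le_card h4
    omega
  have hint : diffI G (A ∩ B) ≤ diffI G A :=
    hA.2 _ (indep_subset G Finset.inter_subset_left hA.1)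
  have hBU : diffI G B ≤ diffI G (A ∪ B) := by
    simp only [diffI] at hint ⊢
    omega
  exact ⟨hU, fun J hJ => (hB.2 J hJ).trans hBU⟩

theorem stmt13 (I : Finset V) (hI : IsMaxCritIndep G I)
    (h : corona G ∩ boundaryL G (I ∪ nbhd G I) = ∅) :
    (∀ S : Finset V, IsMaxCritIndep G S ↔
        ∃ T : Finset V, IsMaxIndep G T ∧ S = T ∩ (I ∪ nbhd G I)) ∧
    nucleus G = core G ∩ ↑(I ∪ nbhd G I) ∧
    diadem G = corona G ∩ ↑(I ∪ nbhd G I) := by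
  classical
  set L : Finset V := I ∪ nbhd G I with hL
  -- every vertex in corona ∩ L has all its neighbors in L
  have hbd : ∀ v ∈ L, v ∈ corona G → ∀ w, G.Adj v w → w ∈ L := by
    intro v hv hcor w hadj
    by_contra hw
    have : v ∈ corona G ∩ boundaryL G L := ⟨hcor, hv, w, hw, hadj⟩
    rw [h] at this
    exact this
  -- key: for any maximum independent set T, T ∩ L is maximum critical of card = |I|
  have key : ∀ T : Finset V, IsMaxIndep G T →
      IsMaxCritIndep G (T ∩ L) ∧ (T ∩ L).card = I.card := by
    intro T hT
    -- J = I ∪ (T \ L) is independent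
    have hJ : Indep G (I ∪ (T \ L)) := by
      intro u hu v hv hadj
      rw [Finset.mem_union] at hu hv
      have hnotadj : ∀ a ∈ I, ∀ b ∈ T \ L, ¬ G.Adj a b := by
        intro a ha b hb hab
        have : b ∈ nbhd G I := (mem_nbhd G).2 ⟨a, ha, hab⟩
        exact (Finset.mem_sdiff.1 hb).2 (Finset.mem_union_right _ this)
      rcases hu with hu | hu <;> rcases hv with hv | hv
      · exact hI.1.1 u hu v hv hadj
      · exact hnotadj u hu v hv hadj
      · exact hnotadj v hv u hu hadj.symm
      · exact hT.1 u ((Finset.mem_sdiff.1 hu).1) v ((Finset.mem_sdiff.1 hv).1) hadj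
    have hdisjJ : Disjoint I (T \ L) := by
      rw [Finset.disjoint_left]
      intro a ha ha'
      exact (Finset.mem_sdiff.1 ha').2 (Finset.mem_union_left _ ha)
    have h1 : I.card + (T \ L).card ≤ T.card := by
      rw [← Finset.card_union_of_disjoint hdisjJ]
      exact hT.2 _ hJ
    have h2 : (T \ L).card + (T ∩ L).card = T.card := Finset.card_sdiff_add_card_inter T L
    have hcardIL : I.card ≤ (T ∩ L).card := by omega
    -- neighbors of T ∩ L lie in L \ T
    have hNsub : nbhd G (T ∩ L) ⊆ L \ T := by
      intro x hx
      rw [mem_nbhd] at hx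
      obtain ⟨v, hv, hadj⟩ := hx
      rw [Finset.mem_inter] at hv
      have hxT : x ∉ T := fun hxT => hT.1 v hv.1 x hxT hadj
      have hxL : x ∈ L := hbd v hv.2 ⟨T, hT, hv.1⟩ x hadj
      exact Finset.mem_sdiff.2 ⟨hxL, hxT⟩
    have h3 : (nbhd G (T ∩ L)).card ≤ (L \ T).card := Finset.card_le_card hNsub
    have h4 : (L \ T).card + (L ∩ T).card = L.card := Finset.card_sdiff_add_card_inter L T
    have h5 : (L ∩ T).card = (T ∩ L).card := by rw [Finset.inter_comm]
    have h6 : L.card ≤ I.card + (nbhd G I).card := Finset.card_union_le _ _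
    have hdI : diffI G I ≤ diffI G (T ∩ L) := by
      simp only [diffI]
      omega
    have hcrit : IsCritIndep G (T ∩ L) :=
      ⟨indep_subset G Finset.inter_subset_left hT.1,
        fun J hJ => (hI.1.2 J hJ).trans hdI⟩
    have hle : (T ∩ L).card ≤ I.card := hI.2 _ hcrit
    exact ⟨⟨hcrit, fun J hJ => (hI.2 J hJ).trans hcardIL⟩, le_antisymm hle hcardIL⟩
  obtain ⟨T₀, hT₀⟩ := exists_maxIndep G
  -- the main characterization
  have P1 : ∀ S : Finset V, IsMaxCritIndep G S ↔
      ∃ T : Finset V, IsMaxIndep G T ∧ S = T ∩ L := by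
    intro S
    constructor
    · intro hS
      have hScard : S.card = I.card := le_antisymm (hI.2 _ hS.1) (hS.2 _ hI.1)
      -- extend S to a maximum independent set T'
      set T' : Finset V := S ∪ (T₀ \ (S ∪ nbhd G S)) with hT'def
      have hT'ind : Indep G T' := by
        intro u hu v hv hadj
        rw [Finset.mem_union] at hu hv
        have hnotadj : ∀ a ∈ S, ∀ b ∈ T₀ \ (S ∪ nbhd G S), ¬ G.Adj a b := by
          intro a ha b hb hab
          have : b ∈ nbhd G S := (mem_nbhd G).2 ⟨a, ha, hab⟩
          exact (Finset.mem_sdiff.1 hb).2 (Finset.mem_union_right _ this)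
        rcases hu with hu | hu <;> rcases hv with hv | hv
        · exact hS.1.1 u hu v hv hadj
        · exact hnotadj u hu v hv hadj
        · exact hnotadj v hv u hu hadj.symm
        · exact hT₀.1 u (Finset.mem_sdiff.1 hu).1 v (Finset.mem_sdiff.1 hv).1 hadj
      have hdisj : Disjoint S (T₀ \ (S ∪ nbhd G S)) := by
        rw [Finset.disjoint_left]
        intro a ha ha'
        exact (Finset.mem_sdiff.1 ha').2 (Finset.mem_union_left _ ha)
      have hbt : (nbhd G S ∩ T₀).card ≤ (S \ T₀).card := bt_ineq G hS.1 hT₀.1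
      have hc1 : (T₀ \ (S ∪ nbhd G S)).card + (T₀ ∩ (S ∪ nbhd G S)).card = T₀.card :=
        Finset.card_sdiff_add_card_inter T₀ _
      have hc2 : (T₀ ∩ (S ∪ nbhd G S)).card ≤ (T₀ ∩ S).card + (T₀ ∩ nbhd G S).card := by
        rw [Finset.inter_union_distrib_left]
        exact Finset.card_union_le _ _
      have hc3 : (T₀ ∩ nbhd G S).card = (nbhd G S ∩ T₀).card := by rw [Finset.inter_comm]
      have hc4 : (S \ T₀).card + (S ∩ T₀).card = S.card := Finset.card_sdiff_add_card_inter S T₀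
      have hc5 : (S ∩ T₀).card = (T₀ ∩ S).card := by rw [Finset.inter_comm]
      have hT'card : T₀.card ≤ T'.card := by
        rw [hT'def, Finset.card_union_of_disjoint hdisj]
        omega
      have hT'max : IsMaxIndep G T' := ⟨hT'ind, fun J hJ => (hT₀.2 J hJ).trans hT'card⟩
      obtain ⟨hTLcrit, hTLcard⟩ := key T' hT'max
      -- U = S ∪ (T' ∩ L) is independent (both inside T')
      have hSsubT' : S ⊆ T' := Finset.subset_union_left
      have hUsub : S ∪ (T' ∩ L) ⊆ T' :=
        Finset.union_subset hSsubT' Finset.inter_subset_left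
      have hUind : Indep G (S ∪ (T' ∩ L)) := indep_subset G hUsub hT'ind
      have hUcrit : IsCritIndep G (S ∪ (T' ∩ L)) := union_crit G hS.1 hTLcrit.1 hUind
      have hUcard : (S ∪ (T' ∩ L)).card ≤ S.card := (hI.2 _ hUcrit).trans hScard.ge
      have hUeq : S ∪ (T' ∩ L) = S :=
        (Finset.eq_of_subset_of_card_le Finset.subset_union_left hUcard).symm
      have hTLS : T' ∩ L ⊆ S := by
        rw [← hUeq]
        exact Finset.subset_union_right
      have : T' ∩ L = S :=
        Finset.eq_of_subset_of_card_le hTLS (by omega)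
      exact ⟨T', hT'max, this.symm⟩
    · rintro ⟨T, hT, rfl⟩
      exact (key T hT).1
  refine ⟨P1, ?_, ?_⟩
  · ext v
    simp only [Set.mem_inter_iff, Finset.mem_coe]
    constructor
    · intro hv
      have hv0 := hv (T₀ ∩ L) (key T₀ hT₀).1
      refine ⟨fun T hT => ?_, Finset.mem_of_mem_inter_right hv0⟩
      exact Finset.mem_of_mem_inter_left (hv (T ∩ L) (key T hT).1)
    · rintro ⟨hvcore, hvL⟩ S hS
      obtain ⟨T, hT, rfl⟩ := (P1 S).1 hS
      exact Finset.mem_inter.2 ⟨hvcore T hT, hvL⟩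
  · ext v
    simp only [Set.mem_inter_iff, Finset.mem_coe]
    constructor
    · rintro ⟨S, hS, hvS⟩
      obtain ⟨T, hT, rfl⟩ := (P1 S).1 hS
      rw [Finset.mem_inter] at hvS
      exact ⟨⟨T, hT, hvS.1⟩, hvS.2⟩
    · rintro ⟨⟨T, hT, hvT⟩, hvL⟩
      exact ⟨T ∩ L, (key T hT).1, Finset.mem_inter.2 ⟨hvT, hvL⟩⟩
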